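/- The composed linear order ≺ = ≺₂ ∘ ≺₁ on E(G₂ ∘ G₁) is admissible: for every inner vertex v of G = G₂ ∘ G₁, the input edges of G avoid the convex hull of O(v) and the output edges of G avoid the convex hull of I(v). -/

import Mathlib

/-- A progressive graph: a directed (multi)graph with sources `s`, targets `t`, and
a distinguished boundary set `σ` of vertices. -/
structure PGraph where
  V : Type
  E : Type
  s : E → V
  t : E → V
  σ : Set V

namespace PGraph

variable (G : PGraph)

/-- One edge can be followed by another. -/
def step (e f : G.E) : Prop := G.t e = G.s f

/-- The reachable order: a directed path starts with `e₁` and ends with `e₂`. -/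
def reach : G.E → G.E → Prop := Relation.ReflTransGen G.step

/-- No directed cycles. -/
def Acyclic : Prop := ∀ e, ¬ Relation.TransGen G.step e e

/-- Incoming edges of a vertex. -/
def I (v : G.V) : Set G.E := {e | G.t e = v}

/-- Outgoing edges of a vertex. -/
def O (v : G.V) : Set G.E := {e | G.s e = v}

/-- An input edge: it starts at a boundary vertex. -/
def InputEdge (e : G.E) : Prop := G.s e ∈ G.σ

/-- An output edge: it ends at a boundary vertex. -/
def OutputEdge (e : G.E) : Prop := G.t e ∈ G.σ

/-- An inner vertex. -/
def Inner (v : G.V) : Prop := v ∉ G.σ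

/-- An input vertex: a boundary vertex which is a source. -/
def InputVertex (v : G.V) : Prop := v ∈ G.σ ∧ ∃ e, G.s e = v

/-- An output vertex: a boundary vertex which is a sink. -/
def OutputVertex (v : G.V) : Prop := v ∈ G.σ ∧ ∃ e, G.t e = v

/-- The boundary consists of leaves: every boundary vertex has exactly one
incident edge-end. -/
def Progressive : Prop := ∀ v ∈ G.σ, ∃! e : G.E, G.s e = v ∨ G.t e = v

/-- The reflexive closure of a strict order on edges. -/
def le (lt : G.E → G.E → Prop) (a b : G.E) : Prop := lt a b ∨ a = b

/-- The convex hull of a set of edges with respect to a linear order `lt`. -/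
def conv (lt : G.E → G.E → Prop) (X : Set G.E) : Set G.E :=
  {y | ∃ a ∈ X, ∃ b ∈ X, G.le lt a y ∧ G.le lt y b}

/-- (Q₁): the reachable order implies the linear order. -/
def Q1 (lt : G.E → G.E → Prop) : Prop :=
  ∀ e₁ e₂, G.reach e₁ e₂ → G.le lt e₁ e₂

/-- (Q₂), the nesting condition. -/
def Q2 (lt : G.E → G.E → Prop) : Prop :=
  ∀ e₁ e e₂ : G.E, lt e₁ e → lt e e₂ →
    (G.t e₁ = G.t e₂ → G.I (G.t e) ⊆ G.conv lt (G.I (G.t e₁))) ∧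
    (G.s e₁ = G.s e₂ → G.O (G.s e) ⊆ G.conv lt (G.O (G.s e₁))) ∧
    (G.t e₁ = G.s e₂ →
      G.I (G.t e) ⊆ G.conv lt (G.I (G.t e₁)) ∨ G.O (G.s e) ⊆ G.conv lt (G.O (G.s e₂)))

/-- An upward planar order: a linear (strict total) order on edges satisfying
(Q₁) and the nesting condition (Q₂). -/
def UPO (lt : G.E → G.E → Prop) : Prop :=
  IsStrictTotalOrder G.E lt ∧ G.Q1 lt ∧ G.Q2 lt

/-- Admissibility: for every inner vertex `v`, input edges avoid `conv (O v)` and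
output edges avoid `conv (I v)`. -/
def Admissible (lt : G.E → G.E → Prop) : Prop :=
  ∀ v : G.V, G.Inner v →
    (∀ e, G.InputEdge e → e ∉ G.conv lt (G.O v)) ∧
    (∀ e, G.OutputEdge e → e ∉ G.conv lt (G.I v))

end PGraph

/-- Data exhibiting `G` as the composite `G₂ ∘ G₁` of two progressive graphs:
the edges of `G₁` and `G₂` embed into those of `G` via `j₁`, `j₂`, overlapping
exactly on the output edges of `G₁`, identified with the input edges of `G₂`;
the removed boundary vertices are the output vertices of `G₁` and the input
vertices of `G₂`, and the boundary of `G` is the union of the input vertices of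
`G₁` and the output vertices of `G₂`. -/
structure CompData (G₁ G₂ G : PGraph) where
  j₁ : G₁.E → G.E
  j₂ : G₂.E → G.E
  k₁ : G₁.V → G.V
  k₂ : G₂.V → G.V
  inj₁ : Function.Injective j₁
  inj₂ : Function.Injective j₂
  coverE : ∀ e : G.E, (∃ a, j₁ a = e) ∨ (∃ b, j₂ b = e)
  glue : ∀ a b, j₁ a = j₂ b → G₁.OutputEdge a ∧ G₂.InputEdge b
  glueOut : ∀ a, G₁.OutputEdge a → ∃ b, G₂.InputEdge b ∧ j₁ a = j₂ b
  glueIn : ∀ b, G₂.InputEdge b → ∃ a, G₁.OutputEdge a ∧ j₁ a = j₂ b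
  src₁ : ∀ a, G.s (j₁ a) = k₁ (G₁.s a)
  tgt₁ : ∀ a, ¬ G₁.OutputEdge a → G.t (j₁ a) = k₁ (G₁.t a)
  tgt₂ : ∀ b, G.t (j₂ b) = k₂ (G₂.t b)
  src₂ : ∀ b, ¬ G₂.InputEdge b → G.s (j₂ b) = k₂ (G₂.s b)
  injV₁ : ∀ v w, ¬ G₁.OutputVertex v → ¬ G₁.OutputVertex w → k₁ v = k₁ w → v = w
  injV₂ : ∀ v w, ¬ G₂.InputVertex v → ¬ G₂.InputVertex w → k₂ v = k₂ w → v = w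
  disjV : ∀ v w, ¬ G₁.OutputVertex v → ¬ G₂.InputVertex w → k₁ v ≠ k₂ w
  coverV : ∀ u : G.V,
    (∃ v, ¬ G₁.OutputVertex v ∧ k₁ v = u) ∨ (∃ w, ¬ G₂.InputVertex w ∧ k₂ w = u)
  bdry : ∀ u : G.V,
    u ∈ G.σ ↔ (∃ v, G₁.InputVertex v ∧ k₁ v = u) ∨ (∃ w, G₂.OutputVertex w ∧ k₂ w = u)

/-- `lt` is the shuffle-style composed linear order `lt₂ ∘ lt₁` on the edges of the
composite: it restricts to `lt₁` on `E(G₁)` and to `lt₂` on `E(G₂)`, and an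
unidentified edge of `G₁` precedes an unidentified edge of `G₂` iff some identified
edge `ē = j₁ o = j₂ i` lies weakly between them. -/
def IsCompOrder {G₁ G₂ G : PGraph} (C : CompData G₁ G₂ G)
    (lt₁ : G₁.E → G₁.E → Prop) (lt₂ : G₂.E → G₂.E → Prop)
    (lt : G.E → G.E → Prop) : Prop :=
  (∀ a a', lt₁ a a' ↔ lt (C.j₁ a) (C.j₁ a')) ∧
  (∀ b b', lt₂ b b' ↔ lt (C.j₂ b) (C.j₂ b')) ∧
  (∀ a b, (∀ b', C.j₁ a ≠ C.j₂ b') → (∀ a', C.j₂ b ≠ C.j₁ a') →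
    (lt (C.j₁ a) (C.j₂ b) ↔
      ∃ o i, C.j₁ o = C.j₂ i ∧ G₁.le lt₁ a o ∧ G₂.le lt₂ i b))

/-!
The composite's boundary consists of the input vertices of `G₁` and the output vertices of `G₂`,
so an input edge of `G` is an input edge of `G₁`, an output edge of `G` is an output edge of
`G₂`, and an inner vertex of `G` is an inner vertex `w` of `G₁` or of `G₂`, with the same incident
edges. Since `≺` restricts to `≺₁` and `≺₂`, convex hulls pull back, and every case reduces to
admissibility of `G₁` or `G₂` except one per side: an unglued edge of `G₂` lying between two
incoming edges of an inner vertex of `G₁` (and dually). The shuffle puts a glued edge, i.e. an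
output edge of `G₁`, between them as well, contradicting admissibility of `G₁`.
-/

namespace PGraph

section Conv

variable {G H : PGraph} {ltG : G.E → G.E → Prop} {ltH : H.E → H.E → Prop} {f : G.E → H.E}

lemma conv_mono {X Y : Set G.E} (h : X ⊆ Y) : G.conv ltG X ⊆ G.conv ltG Y :=
  fun _ ⟨a, ha, b, hb, hay, hyb⟩ => ⟨a, h ha, b, h hb, hay, hyb⟩

lemma le_of_map_le (hf : Function.Injective f) (hlt : ∀ a b, ltG a b ↔ ltH (f a) (f b))
    {a b : G.E} (h : H.le ltH (f a) (f b)) : G.le ltG a b :=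
  h.imp (hlt a b).2 (fun h => hf h)

lemma le_or_lt_of_map [Std.Trichotomous ltH] (hf : Function.Injective f)
    (hlt : ∀ a b, ltG a b ↔ ltH (f a) (f b)) (a b : G.E) : G.le ltG a b ∨ ltG b a := by
  rcases trichotomous_of ltH (f a) (f b) with h | h | h
  · exact Or.inl (Or.inl ((hlt a b).2 h))
  · exact Or.inl (Or.inr (hf h))
  · exact Or.inr ((hlt b a).2 h)

lemma mem_conv_of_map_mem_conv_image (hf : Function.Injective f)
    (hlt : ∀ a b, ltG a b ↔ ltH (f a) (f b)) {X : Set G.E} {a : G.E}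
    (h : f a ∈ H.conv ltH (f '' X)) : a ∈ G.conv ltG X := by
  obtain ⟨_, ⟨x, hx, rfl⟩, _, ⟨y, hy, rfl⟩, hxa, hay⟩ := h
  exact ⟨x, hx, y, hy, le_of_map_le hf hlt hxa, le_of_map_le hf hlt hay⟩

end Conv

variable {G : PGraph}

lemma not_inputEdge_of_mem_O {v : G.V} (hv : G.Inner v) {e : G.E} (he : e ∈ G.O v) :
    ¬ G.InputEdge e :=
  fun h => hv (he ▸ h)

lemma not_outputEdge_of_mem_I {v : G.V} (hv : G.Inner v) {e : G.E} (he : e ∈ G.I v) :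
    ¬ G.OutputEdge e :=
  fun h => hv (he ▸ h)

lemma Inner.not_inputVertex {v : G.V} (hv : G.Inner v) : ¬ G.InputVertex v :=
  fun h => hv h.1

lemma Inner.not_outputVertex {v : G.V} (hv : G.Inner v) : ¬ G.OutputVertex v :=
  fun h => hv h.1

lemma Progressive.target_ne_of_source_eq (hP : G.Progressive) (hA : G.Acyclic) {v : G.V}
    (hv : v ∈ G.σ) {e f : G.E} (he : G.s e = v) : G.t f ≠ v := by
  intro hf
  obtain ⟨_, -, huniq⟩ := hP v hv
  obtain rfl : f = e := (huniq f (Or.inr hf)).trans (huniq e (Or.inl he)).symm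
  exact hA f (Relation.TransGen.single (hf.trans he.symm))

lemma Progressive.not_outputVertex_source (hP : G.Progressive) (hA : G.Acyclic) (e : G.E) :
    ¬ G.OutputVertex (G.s e) :=
  fun ⟨hσ, _, hf⟩ => hP.target_ne_of_source_eq hA hσ rfl hf

lemma Progressive.not_inputVertex_target (hP : G.Progressive) (hA : G.Acyclic) (e : G.E) :
    ¬ G.InputVertex (G.t e) :=
  fun ⟨hσ, _, hf⟩ => hP.target_ne_of_source_eq hA hσ hf rfl

end PGraph

open PGraph

namespace CompData

variable {G₁ G₂ G : PGraph} (C : CompData G₁ G₂ G)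

lemma exists_j₁_or_j₂_not_inputEdge (e : G.E) :
    (∃ a, C.j₁ a = e) ∨ ∃ b, C.j₂ b = e ∧ ¬ G₂.InputEdge b := by
  rcases C.coverE e with h | ⟨b, rfl⟩
  · exact Or.inl h
  · by_cases hb : G₂.InputEdge b
    · obtain ⟨a, -, hab⟩ := C.glueIn b hb
      exact Or.inl ⟨a, hab⟩
    · exact Or.inr ⟨b, rfl, hb⟩

lemma exists_j₁_not_outputEdge_or_j₂ (e : G.E) :
    (∃ a, C.j₁ a = e ∧ ¬ G₁.OutputEdge a) ∨ ∃ b, C.j₂ b = e := by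
  rcases C.coverE e with ⟨a, rfl⟩ | h
  · by_cases ha : G₁.OutputEdge a
    · obtain ⟨b, -, hab⟩ := C.glueOut a ha
      exact Or.inr ⟨b, hab.symm⟩
    · exact Or.inl ⟨a, rfl, ha⟩
  · exact Or.inr h

lemma inner_of_inner_k₁ (hP₁ : G₁.Progressive) {w : G₁.V} (hw : ¬ G₁.OutputVertex w)
    (hv : G.Inner (C.k₁ w)) : G₁.Inner w := by
  intro hσ
  obtain ⟨f, hf | hf, -⟩ := hP₁ w hσ
  · exact hv ((C.bdry _).2 (Or.inl ⟨w, ⟨hσ, f, hf⟩, rfl⟩))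
  · exact hw ⟨hσ, f, hf⟩

lemma inner_of_inner_k₂ (hP₂ : G₂.Progressive) {w : G₂.V} (hw : ¬ G₂.InputVertex w)
    (hv : G.Inner (C.k₂ w)) : G₂.Inner w := by
  intro hσ
  obtain ⟨f, hf | hf, -⟩ := hP₂ w hσ
  · exact hw ⟨hσ, f, hf⟩
  · exact hv ((C.bdry _).2 (Or.inr ⟨w, ⟨hσ, f, hf⟩, rfl⟩))

lemma mem_σ_of_k₁_mem_σ (hP₁ : G₁.Progressive) (hA₁ : G₁.Acyclic) (hP₂ : G₂.Progressive)
    (hA₂ : G₂.Acyclic) {v : G₁.V} (hv : ¬ G₁.OutputVertex v) (h : C.k₁ v ∈ G.σ) : v ∈ G₁.σ := by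
  rcases (C.bdry _).1 h with ⟨_, ⟨hσ, f, rfl⟩, hf⟩ | ⟨_, ⟨-, f, rfl⟩, hf⟩
  · rwa [← C.injV₁ _ _ (hP₁.not_outputVertex_source hA₁ f) hv hf]
  · exact (C.disjV v _ hv (hP₂.not_inputVertex_target hA₂ f) hf.symm).elim

lemma mem_σ_of_k₂_mem_σ (hP₁ : G₁.Progressive) (hA₁ : G₁.Acyclic) (hP₂ : G₂.Progressive)
    (hA₂ : G₂.Acyclic) {v : G₂.V} (hv : ¬ G₂.InputVertex v) (h : C.k₂ v ∈ G.σ) : v ∈ G₂.σ := by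
  rcases (C.bdry _).1 h with ⟨_, ⟨-, f, rfl⟩, hf⟩ | ⟨_, ⟨hσ, f, rfl⟩, hf⟩
  · exact (C.disjV _ v (hP₁.not_outputVertex_source hA₁ f) hv hf).elim
  · rwa [← C.injV₂ _ _ (hP₂.not_inputVertex_target hA₂ f) hv hf]

lemma exists_j₁_of_inputEdge (hP₁ : G₁.Progressive) (hA₁ : G₁.Acyclic)
    (hP₂ : G₂.Progressive) (hA₂ : G₂.Acyclic) {e : G.E} (he : G.InputEdge e) :
    ∃ a, C.j₁ a = e ∧ G₁.InputEdge a := by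
  rcases C.exists_j₁_or_j₂_not_inputEdge e with ⟨a, rfl⟩ | ⟨b, rfl, hb⟩
  · refine ⟨a, rfl, C.mem_σ_of_k₁_mem_σ hP₁ hA₁ hP₂ hA₂ (hP₁.not_outputVertex_source hA₁ a) ?_⟩
    rw [← C.src₁]
    exact he
  · refine (hb (C.mem_σ_of_k₂_mem_σ hP₁ hA₁ hP₂ hA₂ (fun h => hb h.1) ?_)).elim
    rw [← C.src₂ b hb]
    exact he

lemma exists_j₂_of_outputEdge (hP₁ : G₁.Progressive) (hA₁ : G₁.Acyclic)
    (hP₂ : G₂.Progressive) (hA₂ : G₂.Acyclic) {e : G.E} (he : G.OutputEdge e) :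
    ∃ b, C.j₂ b = e ∧ G₂.OutputEdge b := by
  rcases C.exists_j₁_not_outputEdge_or_j₂ e with ⟨a, rfl, ha⟩ | ⟨b, rfl⟩
  · refine (ha (C.mem_σ_of_k₁_mem_σ hP₁ hA₁ hP₂ hA₂ (fun h => ha h.1) ?_)).elim
    rw [← C.tgt₁ a ha]
    exact he
  · refine ⟨b, rfl, C.mem_σ_of_k₂_mem_σ hP₁ hA₁ hP₂ hA₂ (hP₂.not_inputVertex_target hA₂ b) ?_⟩
    rw [← C.tgt₂]
    exact he

lemma O_k₁_subset (hP₁ : G₁.Progressive) (hA₁ : G₁.Acyclic) {w : G₁.V} (hw : G₁.Inner w) :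
    G.O (C.k₁ w) ⊆ C.j₁ '' G₁.O w := by
  intro e (he : G.s e = _)
  rcases C.exists_j₁_or_j₂_not_inputEdge e with ⟨a, rfl⟩ | ⟨b, rfl, hb⟩
  · rw [C.src₁] at he
    exact ⟨a, C.injV₁ _ _ (hP₁.not_outputVertex_source hA₁ a) hw.not_outputVertex he, rfl⟩
  · rw [C.src₂ b hb] at he
    exact (C.disjV w _ hw.not_outputVertex (fun h => hb h.1) he.symm).elim

lemma I_k₁_subset (hP₂ : G₂.Progressive) (hA₂ : G₂.Acyclic) {w : G₁.V} (hw : G₁.Inner w) :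
    G.I (C.k₁ w) ⊆ C.j₁ '' G₁.I w := by
  intro e (he : G.t e = _)
  rcases C.exists_j₁_not_outputEdge_or_j₂ e with ⟨a, rfl, ha⟩ | ⟨b, rfl⟩
  · rw [C.tgt₁ a ha] at he
    exact ⟨a, C.injV₁ _ _ (fun h => ha h.1) hw.not_outputVertex he, rfl⟩
  · rw [C.tgt₂] at he
    exact (C.disjV w _ hw.not_outputVertex (hP₂.not_inputVertex_target hA₂ b) he.symm).elim

lemma O_k₂_subset (hP₁ : G₁.Progressive) (hA₁ : G₁.Acyclic) {w : G₂.V} (hw : G₂.Inner w) :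
    G.O (C.k₂ w) ⊆ C.j₂ '' G₂.O w := by
  intro e (he : G.s e = _)
  rcases C.exists_j₁_or_j₂_not_inputEdge e with ⟨a, rfl⟩ | ⟨b, rfl, hb⟩
  · rw [C.src₁] at he
    exact (C.disjV _ w (hP₁.not_outputVertex_source hA₁ a) hw.not_inputVertex he).elim
  · rw [C.src₂ b hb] at he
    exact ⟨b, C.injV₂ _ _ (fun h => hb h.1) hw.not_inputVertex he, rfl⟩

lemma I_k₂_subset (hP₂ : G₂.Progressive) (hA₂ : G₂.Acyclic) {w : G₂.V} (hw : G₂.Inner w) :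
    G.I (C.k₂ w) ⊆ C.j₂ '' G₂.I w := by
  intro e (he : G.t e = _)
  rcases C.exists_j₁_not_outputEdge_or_j₂ e with ⟨a, rfl, ha⟩ | ⟨b, rfl⟩
  · rw [C.tgt₁ a ha] at he
    exact (C.disjV _ w (fun h => ha h.1) hw.not_inputVertex he).elim
  · rw [C.tgt₂] at he
    exact ⟨b, C.injV₂ _ _ (hP₂.not_inputVertex_target hA₂ b) hw.not_inputVertex he, rfl⟩

end CompData

namespace IsCompOrder

variable {G₁ G₂ G : PGraph} {C : CompData G₁ G₂ G} {lt₁ : G₁.E → G₁.E → Prop}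
  {lt₂ : G₂.E → G₂.E → Prop} {lt : G.E → G.E → Prop} [IsStrictTotalOrder G.E lt]

lemma exists_outputEdge_mem_conv (hC : IsCompOrder C lt₁ lt₂ lt) {X : Set G₁.E}
    (hX : ∀ x ∈ X, ¬ G₁.OutputEdge x) {b : G₂.E} (hb : C.j₂ b ∈ G.conv lt (C.j₁ '' X)) :
    ∃ o, G₁.OutputEdge o ∧ o ∈ G₁.conv lt₁ X := by
  by_cases hglued : ∃ a, C.j₂ b = C.j₁ a
  · obtain ⟨a, hab⟩ := hglued
    rw [hab] at hb
    exact ⟨a, (C.glue a b hab.symm).1, mem_conv_of_map_mem_conv_image C.inj₁ hC.1 hb⟩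
  push Not at hglued
  obtain ⟨_, ⟨x, hx, rfl⟩, _, ⟨y, hy, rfl⟩, hxb, hby⟩ := hb
  have unglued : ∀ z ∈ X, ∀ b', C.j₁ z ≠ C.j₂ b' := fun z hz b' h => hX z hz (C.glue z b' h).1
  have hxb : lt (C.j₁ x) (C.j₂ b) := hxb.resolve_right (unglued x hx b)
  have hby : lt (C.j₂ b) (C.j₁ y) := hby.resolve_right (hglued y)
  obtain ⟨o, i, hoi, hxo, hib⟩ := (hC.2.2 x b (unglued x hx) hglued).1 hxb
  -- `y ≤₁ o` would put the glued edge, hence `y`, below `b`.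
  refine ⟨o, (C.glue o i hoi).1, x, hx, y, hy, hxo, ?_⟩
  refine (le_or_lt_of_map C.inj₁ hC.1 y o).elim (fun hyo => ?_) Or.inl
  exact (asymm_of lt hby ((hC.2.2 y b (unglued y hy) hglued).2 ⟨o, i, hoi, hyo, hib⟩)).elim

lemma exists_inputEdge_mem_conv (hC : IsCompOrder C lt₁ lt₂ lt) {Y : Set G₂.E}
    (hY : ∀ y ∈ Y, ¬ G₂.InputEdge y) {a : G₁.E} (ha : C.j₁ a ∈ G.conv lt (C.j₂ '' Y)) :
    ∃ i, G₂.InputEdge i ∧ i ∈ G₂.conv lt₂ Y := by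
  by_cases hglued : ∃ b, C.j₁ a = C.j₂ b
  · obtain ⟨b, hab⟩ := hglued
    rw [hab] at ha
    exact ⟨b, (C.glue a b hab).2, mem_conv_of_map_mem_conv_image C.inj₂ hC.2.1 ha⟩
  push Not at hglued
  obtain ⟨_, ⟨x, hx, rfl⟩, _, ⟨y, hy, rfl⟩, hxa, hay⟩ := ha
  have unglued : ∀ z ∈ Y, ∀ a', C.j₂ z ≠ C.j₁ a' :=
    fun z hz a' h => hY z hz (C.glue a' z h.symm).2
  have hxa : lt (C.j₂ x) (C.j₁ a) := hxa.resolve_right (unglued x hx a)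
  have hay : lt (C.j₁ a) (C.j₂ y) := hay.resolve_right (hglued y)
  obtain ⟨o, i, hoi, hao, hiy⟩ := (hC.2.2 a y hglued (unglued y hy)).1 hay
  -- `i ≤₂ x` would put the glued edge, hence `a`, below `x`.
  refine ⟨i, (C.glue o i hoi).2, x, hx, y, hy, ?_, hiy⟩
  refine (le_or_lt_of_map C.inj₂ hC.2.1 i x).elim (fun hix => ?_) Or.inl
  exact (asymm_of lt hxa ((hC.2.2 a x hglued (unglued x hx)).2 ⟨o, i, hoi, hao, hix⟩)).elim

end IsCompOrder

theorem comp_admissible_general (G₁ G₂ G : PGraph)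
    (lt₁ : G₁.E → G₁.E → Prop) (lt₂ : G₂.E → G₂.E → Prop) (lt : G.E → G.E → Prop)
    (hP₁ : G₁.Progressive) (hA₁ : G₁.Acyclic) (hAd₁ : G₁.Admissible lt₁)
    (hP₂ : G₂.Progressive) (hA₂ : G₂.Acyclic) (hAd₂ : G₂.Admissible lt₂)
    (C : CompData G₁ G₂ G) (hst : IsStrictTotalOrder G.E lt)
    (hC : IsCompOrder C lt₁ lt₂ lt) :
    G.Admissible lt := by
  intro v hv
  refine ⟨fun e he hconv => ?_, fun e he hconv => ?_⟩
  all_goals rcases C.coverV v with ⟨w, hw, rfl⟩ | ⟨w, hw, rfl⟩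
  · obtain ⟨a, rfl, ha⟩ := C.exists_j₁_of_inputEdge hP₁ hA₁ hP₂ hA₂ he
    have hw₁ := C.inner_of_inner_k₁ hP₁ hw hv
    exact (hAd₁ w hw₁).1 a ha <| mem_conv_of_map_mem_conv_image C.inj₁ hC.1 <|
      conv_mono (C.O_k₁_subset hP₁ hA₁ hw₁) hconv
  · obtain ⟨a, rfl, -⟩ := C.exists_j₁_of_inputEdge hP₁ hA₁ hP₂ hA₂ he
    have hw₂ := C.inner_of_inner_k₂ hP₂ hw hv
    obtain ⟨i, hi, hiconv⟩ := hC.exists_inputEdge_mem_conv (fun _ => not_inputEdge_of_mem_O hw₂)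
      (conv_mono (C.O_k₂_subset hP₁ hA₁ hw₂) hconv)
    exact (hAd₂ w hw₂).1 i hi hiconv
  · obtain ⟨b, rfl, -⟩ := C.exists_j₂_of_outputEdge hP₁ hA₁ hP₂ hA₂ he
    have hw₁ := C.inner_of_inner_k₁ hP₁ hw hv
    obtain ⟨o, ho, hoconv⟩ := hC.exists_outputEdge_mem_conv (fun _ => not_outputEdge_of_mem_I hw₁)
      (conv_mono (C.I_k₁_subset hP₂ hA₂ hw₁) hconv)
    exact (hAd₁ w hw₁).2 o ho hoconv
  · obtain ⟨b, rfl, hb⟩ := C.exists_j₂_of_outputEdge hP₁ hA₁ hP₂ hA₂ he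
    have hw₂ := C.inner_of_inner_k₂ hP₂ hw hv
    exact (hAd₂ w hw₂).2 b hb <| mem_conv_of_map_mem_conv_image C.inj₂ hC.2.1 <|
      conv_mono (C.I_k₂_subset hP₂ hA₂ hw₂) hconv

/-- The composed linear order is admissible: for every inner vertex `v` of the
composite, input edges avoid `conv (O v)` and output edges avoid `conv (I v)`. -/
theorem comp_admissible (G₁ G₂ G : PGraph)
    [Fintype G₁.E] [Fintype G₂.E] [Fintype G.E]
    (lt₁ : G₁.E → G₁.E → Prop) (lt₂ : G₂.E → G₂.E → Prop) (lt : G.E → G.E → Prop)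
    (hP₁ : G₁.Progressive) (hA₁ : G₁.Acyclic) (hU₁ : G₁.UPO lt₁) (hAd₁ : G₁.Admissible lt₁)
    (hP₂ : G₂.Progressive) (hA₂ : G₂.Acyclic) (hU₂ : G₂.UPO lt₂) (hAd₂ : G₂.Admissible lt₂)
    (C : CompData G₁ G₂ G) (hst : IsStrictTotalOrder G.E lt)
    (hC : IsCompOrder C lt₁ lt₂ lt) :
    G.Admissible lt :=
  comp_admissible_general G₁ G₂ G lt₁ lt₂ lt hP₁ hA₁ hAd₁ hP₂ hA₂ hAd₂ C hst hC
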